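/- arXiv:2408.02447 — 3 statements merged into one kernel-verified Lean document; each statement's English description precedes it below -/
import Mathlib

section
/- Let Ω ⊂ ℝ^m be a nonempty open set with finite diameter d, and define H_Ω(t) = ∫_Ω ∫_Ω (4πt)^{-m/2} exp(-|x-y|²/(4t)) dx dy. Then for all t ≥ d², H_Ω''(t) ≥ ((4m²+4m-7)/(16t²))·H_Ω(t). -/
/-!
The integrand depends on `x, y` only through `b = |x - y|²`: it is `heatProfile (-m/2) s b`, where
`heatProfile p s b = (4πs)^p e^{-b/(4s)}`. Differentiating twice in `s`,
`∂²ₛ heatProfile = heatProfile · ((b/(4s²) + p/s)² - b/(2s³) - p/s²)`, and for `p = -m/2` this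
exceeds `(4m² + 4m - 7)/(16t²) · heatProfile` at `s = t` by a positive multiple of
`(t - b)((4m + 7)t - b)`, which is nonnegative because `b ≤ diam(Ω)² ≤ t`. Since `Ω × Ω` has finite
measure and `b` ranges over a compact set, both time derivatives can be taken under the integral.
-/

open Real MeasureTheory Set Function Filter Topology

section ParametricIntegral

variable {α X E : Type*} [MeasurableSpace α] {μ : Measure α} [IsFiniteMeasure μ]
  [TopologicalSpace X] [NormedAddCommGroup E] {g : α → X} {K : Set X}

lemma integrable_comp_of_ae_mem_isCompact {f : X → E} (hf : Continuous f)
    (hg : AEStronglyMeasurable g μ) (hK : IsCompact K) (hgK : ∀ᵐ z ∂μ, g z ∈ K) :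
    Integrable (fun z => f (g z)) μ := by
  obtain ⟨C, hC⟩ := hK.exists_bound_of_continuousOn hf.continuousOn
  exact Integrable.of_bound (hf.comp_aestronglyMeasurable hg) C (hgK.mono fun z hz => hC _ hz)

variable [NormedSpace ℝ E] {U : Set ℝ} {F F' F'' : ℝ → X → E}

lemma hasDerivAt_integral_comp_of_continuousOn (hg : AEStronglyMeasurable g μ)
    (hK : IsCompact K) (hgK : ∀ᵐ z ∂μ, g z ∈ K) (hU : IsOpen U)
    (hF : ContinuousOn (uncurry F) (U ×ˢ univ)) (hF' : ContinuousOn (uncurry F') (U ×ˢ univ))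
    (hderiv : ∀ s ∈ U, ∀ b, HasDerivAt (F · b) (F' s b) s) {s₀ : ℝ} (hs₀ : s₀ ∈ U) :
    HasDerivAt (fun s => ∫ z, F s (g z) ∂μ) (∫ z, F' s₀ (g z) ∂μ) s₀ := by
  have hFs : ∀ s ∈ U, Continuous (F s) := fun s hs =>
    continuousOn_univ.mp (hF.uncurry_left s hs)
  have hF's₀ : Continuous (F' s₀) := continuousOn_univ.mp (hF'.uncurry_left s₀ hs₀)
  obtain ⟨ε, hε, hball⟩ := Metric.isOpen_iff.mp hU s₀ hs₀
  have hclosedBall : Metric.closedBall s₀ (ε / 2) ⊆ U :=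
    (Metric.closedBall_subset_ball (half_lt_self hε)).trans hball
  obtain ⟨C, hC⟩ := ((isCompact_closedBall s₀ (ε / 2)).prod hK).exists_bound_of_continuousOn
    (hF'.mono (prod_mono hclosedBall (subset_univ K)))
  refine (hasDerivAt_integral_of_dominated_loc_of_deriv_le
    (F := fun s z => F s (g z)) (F' := fun s z => F' s (g z)) (bound := fun _ => C)
    (Metric.ball_mem_nhds s₀ (half_pos hε)) ?_
    (integrable_comp_of_ae_mem_isCompact (hFs s₀ hs₀) hg hK hgK)
    (hF's₀.comp_aestronglyMeasurable hg) ?_ (integrable_const C) ?_).2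
  · filter_upwards [hU.mem_nhds hs₀] with s hs
    exact (hFs s hs).comp_aestronglyMeasurable hg
  · filter_upwards [hgK] with z hz s hs
    exact hC (s, g z) ⟨Metric.ball_subset_closedBall hs, hz⟩
  · exact ae_of_all _ fun z s hs =>
      hderiv s (hclosedBall (Metric.ball_subset_closedBall hs)) (g z)

lemma deriv_deriv_integral_comp_of_continuousOn (hg : AEStronglyMeasurable g μ)
    (hK : IsCompact K) (hgK : ∀ᵐ z ∂μ, g z ∈ K) (hU : IsOpen U)
    (hF : ContinuousOn (uncurry F) (U ×ˢ univ)) (hF' : ContinuousOn (uncurry F') (U ×ˢ univ))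
    (hF'' : ContinuousOn (uncurry F'') (U ×ˢ univ))
    (hderiv : ∀ s ∈ U, ∀ b, HasDerivAt (F · b) (F' s b) s)
    (hderiv' : ∀ s ∈ U, ∀ b, HasDerivAt (F' · b) (F'' s b) s) {s₀ : ℝ} (hs₀ : s₀ ∈ U) :
    deriv (deriv fun s => ∫ z, F s (g z) ∂μ) s₀ = ∫ z, F'' s₀ (g z) ∂μ := by
  have hfirst :
      deriv (fun s => ∫ z, F s (g z) ∂μ) =ᶠ[𝓝 s₀] fun s => ∫ z, F' s (g z) ∂μ := by
    filter_upwards [hU.mem_nhds hs₀] with s hs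
    exact (hasDerivAt_integral_comp_of_continuousOn hg hK hgK hU hF hF' hderiv hs).deriv
  rw [hfirst.deriv_eq]
  exact (hasDerivAt_integral_comp_of_continuousOn hg hK hgK hU hF' hF'' hderiv' hs₀).deriv

end ParametricIntegral

noncomputable def heatProfile (p s b : ℝ) : ℝ := (4 * π * s) ^ p * exp (-b / (4 * s))

noncomputable def heatProfileDeriv (p s b : ℝ) : ℝ :=
  heatProfile p s b * (b / (4 * s ^ 2) + p / s)

noncomputable def heatProfileDeriv2 (p s b : ℝ) : ℝ :=
  heatProfile p s b * ((b / (4 * s ^ 2) + p / s) ^ 2 - b / (2 * s ^ 3) - p / s ^ 2)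

section HeatProfile

variable (p : ℝ)

lemma continuous_heatProfile (s : ℝ) : Continuous (heatProfile p s) := by
  unfold heatProfile; fun_prop

lemma continuous_heatProfileDeriv2 (s : ℝ) : Continuous (heatProfileDeriv2 p s) := by
  unfold heatProfileDeriv2 heatProfile; fun_prop

lemma continuousOn_heatProfile : ContinuousOn (uncurry (heatProfile p)) (Ioi 0 ×ˢ univ) := by
  unfold heatProfile; fun_prop (disch := intro x hx; simp at hx; positivity)

lemma continuousOn_heatProfileDeriv :
    ContinuousOn (uncurry (heatProfileDeriv p)) (Ioi 0 ×ˢ univ) := by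
  unfold heatProfileDeriv heatProfile; fun_prop (disch := intro x hx; simp at hx; positivity)

lemma continuousOn_heatProfileDeriv2 :
    ContinuousOn (uncurry (heatProfileDeriv2 p)) (Ioi 0 ×ˢ univ) := by
  unfold heatProfileDeriv2 heatProfile; fun_prop (disch := intro x hx; simp at hx; positivity)

variable {s : ℝ} (b : ℝ) (hs : 0 < s)
include hs

lemma hasDerivAt_heatProfile : HasDerivAt (heatProfile p · b) (heatProfileDeriv p s b) s := by
  have hpow : HasDerivAt (fun s => (4 * π * s) ^ p) (4 * π * p * (4 * π * s) ^ (p - 1)) s := by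
    simpa [mul_comm, mul_assoc] using
      ((hasDerivAt_id s).const_mul (4 * π)).rpow_const (p := p) (Or.inl (by positivity))
  have hexp : HasDerivAt (fun s => exp (-b / (4 * s)))
      (exp (-b / (4 * s)) * (b / (4 * s ^ 2))) s := by
    have := ((hasDerivAt_inv hs.ne').const_mul (-b / 4)).exp
    convert this using 1
    · ext s; congr 1; field_simp
    · field_simp
  refine (hpow.mul hexp).congr_deriv ?_
  unfold heatProfileDeriv heatProfile
  rw [rpow_sub (by positivity), rpow_one]
  field_simp
  ring

lemma hasDerivAt_heatProfileDeriv :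
    HasDerivAt (heatProfileDeriv p · b) (heatProfileDeriv2 p s b) s := by
  have hrate : HasDerivAt (fun s => b / (4 * s ^ 2) + p / s) (-b / (2 * s ^ 3) - p / s ^ 2) s := by
    refine (((hasDerivAt_const s b).div ((hasDerivAt_pow 2 s).const_mul 4) (by positivity)).add
      ((hasDerivAt_const s p).div (hasDerivAt_id s) hs.ne')).congr_deriv ?_
    simp only [id]
    field_simp
    ring
  refine ((hasDerivAt_heatProfile p b hs).mul hrate).congr_deriv ?_
  unfold heatProfileDeriv2 heatProfileDeriv
  ring

end HeatProfile

lemma mul_heatProfile_le_heatProfileDeriv2 {m b t : ℝ} (hm : 0 ≤ m) (hb : 0 ≤ b)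
    (hbt : b ≤ t) (ht : 0 < t) :
    (4 * m ^ 2 + 4 * m - 7) / (16 * t ^ 2) * heatProfile (-m / 2) t b
      ≤ heatProfileDeriv2 (-m / 2) t b := by
  have hgap : ((b / (4 * t ^ 2) + -m / 2 / t) ^ 2 - b / (2 * t ^ 3) - -m / 2 / t ^ 2)
        - (4 * m ^ 2 + 4 * m - 7) / (16 * t ^ 2)
      = (t - b) * ((4 * m + 7) * t - b) / (16 * t ^ 4) := by
    field_simp
    ring
  have hgap_nonneg : 0 ≤ (t - b) * ((4 * m + 7) * t - b) / (16 * t ^ 4) := by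
    exact div_nonneg (mul_nonneg (by linarith) (by nlinarith)) (by positivity)
  rw [heatProfileDeriv2, mul_comm]
  exact mul_le_mul_of_nonneg_left (by linarith) (by unfold heatProfile; positivity)

lemma IsOpen.diam_pos {E : Type*} [NormedAddCommGroup E] [NormedSpace ℝ E] [Nontrivial E]
    {Ω : Set E} (hΩ : IsOpen Ω) (hne : Ω.Nonempty) (hbd : Bornology.IsBounded Ω) :
    0 < Metric.diam Ω := by
  obtain ⟨x, hx⟩ := hne
  obtain ⟨r, hr, hball⟩ := Metric.isOpen_iff.mp hΩ x hx
  calc 0 < 2 * r := by positivity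
    _ = Metric.diam (Metric.ball x r) := (Metric.diam_ball_eq x hr.le).symm
    _ ≤ Metric.diam Ω := Metric.diam_mono hball hbd

theorem heat_content_second_deriv_lower_bound (m : ℕ) (hm : 1 ≤ m)
    (Ω : Set (EuclideanSpace ℝ (Fin m))) (hΩ : IsOpen Ω) (hne : Ω.Nonempty)
    (hbd : Bornology.IsBounded Ω) (t : ℝ) (ht : Metric.diam Ω ^ 2 ≤ t) :
    ((4 * (m : ℝ) ^ 2 + 4 * m - 7) / (16 * t ^ 2))
        * (∫ x in Ω, ∫ y in Ω,
            (4 * Real.pi * t) ^ (-(m : ℝ) / 2) * Real.exp (-(dist x y) ^ 2 / (4 * t)))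
      ≤ deriv (deriv (fun s : ℝ => ∫ x in Ω, ∫ y in Ω,
            (4 * Real.pi * s) ^ (-(m : ℝ) / 2) * Real.exp (-(dist x y) ^ 2 / (4 * s)))) t := by
  have : Nonempty (Fin m) := ⟨⟨0, hm⟩⟩
  have ht₀ : 0 < t := (pow_pos (hΩ.diam_pos hne hbd) 2).trans_le ht
  set μ := (volume : Measure (EuclideanSpace ℝ (Fin m) × EuclideanSpace ℝ (Fin m))).restrict
    (Ω ×ˢ Ω)
  have : IsFiniteMeasure μ := isFiniteMeasure_restrict.2 (hbd.prod hbd).measure_lt_top.ne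
  have hg : AEStronglyMeasurable (fun z => dist z.1 z.2 ^ 2) μ := by fun_prop
  have hgK : ∀ᵐ z ∂μ, dist z.1 z.2 ^ 2 ∈ Icc 0 t :=
    ae_restrict_of_forall_mem (hΩ.prod hΩ).measurableSet fun z hz =>
      ⟨sq_nonneg _,
        (pow_le_pow_left₀ dist_nonneg (Metric.dist_le_diam_of_mem hbd hz.1 hz.2) 2).trans ht⟩
  have hfubini : ∀ s, ∫ x in Ω, ∫ y in Ω,
      (4 * Real.pi * s) ^ (-(m : ℝ) / 2) * Real.exp (-(dist x y) ^ 2 / (4 * s))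
        = ∫ z, heatProfile (-(m : ℝ) / 2) s (dist z.1 z.2 ^ 2) ∂μ := fun s =>
    (setIntegral_prod (fun z => heatProfile (-(m : ℝ) / 2) s (dist z.1 z.2 ^ 2))
      (integrable_comp_of_ae_mem_isCompact (continuous_heatProfile _ s) hg
        isCompact_Icc hgK)).symm
  rw [hfubini t, funext hfubini, deriv_deriv_integral_comp_of_continuousOn hg isCompact_Icc hgK
    isOpen_Ioi (continuousOn_heatProfile _) (continuousOn_heatProfileDeriv _)
    (continuousOn_heatProfileDeriv2 _) (fun s hs b => hasDerivAt_heatProfile _ b hs)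
    (fun s hs b => hasDerivAt_heatProfileDeriv _ b hs) ht₀, ← integral_const_mul]
  refine integral_mono_ae ?_ ?_ (hgK.mono fun z hz =>
    mul_heatProfile_le_heatProfileDeriv2 m.cast_nonneg hz.1 hz.2 ht₀)
  · exact (integrable_comp_of_ae_mem_isCompact (continuous_heatProfile _ t) hg
      isCompact_Icc hgK).const_mul _
  · exact integrable_comp_of_ae_mem_isCompact (continuous_heatProfileDeriv2 _ t) hg
      isCompact_Icc hgK
end

section
/- Let Ω ⊂ ℝ^m be a nonempty open set with 0 < |Ω| < ∞. Then the heat content t ↦ H_Ω(t) is convex on (0,∞): for all t, s > 0 and λ ∈ [0,1], H_Ω(λt + (1−λ)s) ≤ λH_Ω(t) + (1−λ)H_Ω(s). -/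
/-!
Fourier transforming the Gaussian gives
`p(x, y; t) = ∫ e^{-2πi⟪ξ, x - y⟫} e^{-4π²‖ξ‖²t} dξ`, and Fubini then turns the heat content of
any finite measure `μ` into `∫ ‖μ̂(ξ)‖² e^{-4π²‖ξ‖²t} dξ`: a superposition of exponentials in `t`
with nonnegative weights, hence convex in `t`. Lebesgue measure restricted to `Ω` is such a `μ`.
-/

open Real MeasureTheory Complex FourierTransform Module
open scoped RealInnerProductSpace ComplexConjugate

noncomputable section

theorem convexOn_mul_exp_mul {w : ℝ} (hw : 0 ≤ w) (c : ℝ) :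
    ConvexOn ℝ Set.univ fun t => w * rexp (c * t) :=
  (convexOn_exp.comp_linearMap (LinearMap.mulLeft ℝ c)).smul hw

theorem integral_integral_integral_conj_mul_mul {X Ξ : Type*} [MeasurableSpace X]
    [MeasurableSpace Ξ] (μ : Measure X) [IsFiniteMeasure μ] (ν : Measure Ξ) [SFinite ν]
    {e : X → Ξ → ℂ} (he : StronglyMeasurable (Function.uncurry e)) (he_norm : ∀ x ξ, ‖e x ξ‖ = 1)
    {g : Ξ → ℂ} (hg : Integrable g ν) :
    ∫ x, ∫ y, ∫ ξ, conj (e x ξ) * e y ξ * g ξ ∂ν ∂μ ∂μ = ∫ ξ, ‖∫ x, e x ξ ∂μ‖ ^ 2 * g ξ ∂ν := by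
  set F : (X × X) × Ξ → ℂ := fun q => conj (e q.1.1 q.2) * e q.1.2 q.2 * g q.2
  have hF : Integrable F ((μ.prod μ).prod ν) := by
    refine Integrable.mono' ((integrable_const (1 : ℝ)).mul_prod hg.norm) ?_ ?_
    · have h1 : StronglyMeasurable fun q : (X × X) × Ξ => e q.1.1 q.2 :=
        he.comp_measurable (measurable_fst.fst.prodMk measurable_snd)
      have h2 : StronglyMeasurable fun q : (X × X) × Ξ => e q.1.2 q.2 :=
        he.comp_measurable (measurable_fst.snd.prodMk measurable_snd)
      exact ((h1.aestronglyMeasurable.star).mul h2.aestronglyMeasurable).mul hg.1.comp_snd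
    · refine Filter.Eventually.of_forall fun q => ?_
      simp [F, he_norm]
  calc ∫ x, ∫ y, ∫ ξ, conj (e x ξ) * e y ξ * g ξ ∂ν ∂μ ∂μ
      = ∫ p, ∫ ξ, F (p, ξ) ∂ν ∂(μ.prod μ) := integral_integral hF.integral_prod_left
    _ = ∫ ξ, ∫ p, F (p, ξ) ∂(μ.prod μ) ∂ν := integral_integral_swap hF
    _ = ∫ ξ, ‖∫ x, e x ξ ∂μ‖ ^ 2 * g ξ ∂ν := by
      refine integral_congr_ae (Filter.Eventually.of_forall fun ξ => ?_)
      simp only [F]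
      rw [integral_mul_const, integral_prod_mul (fun x => conj (e x ξ)) (fun y => e y ξ),
        integral_conj, conj_mul']

variable {V : Type*} [NormedAddCommGroup V] [InnerProductSpace ℝ V] [FiniteDimensional ℝ V]
  [MeasurableSpace V] [BorelSpace V]

def heatKernel (t : ℝ) (x y : V) : ℝ :=
  (4 * π * t) ^ (-(finrank ℝ V : ℝ) / 2) * rexp (-(dist x y) ^ 2 / (4 * t))

def heatContent (μ : Measure V) (t : ℝ) : ℝ :=
  ∫ x, ∫ y, heatKernel t x y ∂μ ∂μ

theorem heatKernel_eq_fourier {t : ℝ} (ht : 0 < t) (x y : V) :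
    (heatKernel t x y : ℂ) = 𝓕 (fun ξ : V => cexp (-(4 * π ^ 2 * t : ℝ) * ‖ξ‖ ^ 2)) (x - y) := by
  have hb : 0 < ((4 * π ^ 2 * t : ℝ) : ℂ).re := by rw [ofReal_re]; positivity
  rw [fourier_gaussian_innerProductSpace hb, heatKernel, dist_eq_norm]
  have hbase : (π : ℂ) / ((4 * π ^ 2 * t : ℝ) : ℂ) = (((4 * π * t)⁻¹ : ℝ) : ℂ) := by
    push_cast
    field_simp [pi_ne_zero]
  have hexp : -(π : ℂ) ^ 2 * (‖x - y‖ : ℂ) ^ 2 / ((4 * π ^ 2 * t : ℝ) : ℂ)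
      = ((-‖x - y‖ ^ 2 / (4 * t) : ℝ) : ℂ) := by
    push_cast
    field_simp [pi_ne_zero]
  rw [hbase, hexp, ← ofReal_natCast, ← ofReal_ofNat, ← ofReal_div, ← ofReal_cpow (by positivity),
    ← ofReal_exp, ← ofReal_mul, ofReal_inj, Real.inv_rpow (by positivity),
    ← Real.rpow_neg (by positivity), neg_div]

theorem integrable_cexp_neg_mul_sq_norm {b : ℂ} (hb : 0 < b.re) :
    Integrable fun ξ : V => cexp (-b * ‖ξ‖ ^ 2) := by
  simpa using GaussianFourier.integrable_cexp_neg_mul_sq_norm_add hb 0 (0 : V)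

theorem integrable_exp_neg_mul_sq_norm {b : ℝ} (hb : 0 < b) :
    Integrable fun ξ : V => rexp (-b * ‖ξ‖ ^ 2) := by
  simpa [← ofReal_pow, ← ofReal_neg, ← ofReal_mul, exp_ofReal_re] using
    (integrable_cexp_neg_mul_sq_norm (V := V) (b := b) (by simpa)).re

theorem heatContent_eq_integral_charFun (μ : Measure V) [IsFiniteMeasure μ] {t : ℝ} (ht : 0 < t) :
    heatContent μ t =
      ∫ ξ, ‖charFun μ ((2 * π) • ξ)‖ ^ 2 * rexp (-(4 * π ^ 2 * ‖ξ‖ ^ 2) * t) := by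
  set e : V → V → ℂ := fun x ξ => cexp (⟪x, (2 * π) • ξ⟫ * I)
  set g : V → ℂ := fun ξ => cexp (-(4 * π ^ 2 * t : ℝ) * ‖ξ‖ ^ 2)
  have he : StronglyMeasurable (Function.uncurry e) :=
    (by fun_prop : Continuous fun p : V × V => cexp (⟪p.1, (2 * π) • p.2⟫ * I)).stronglyMeasurable
  have hg : Integrable g := integrable_cexp_neg_mul_sq_norm (by rw [ofReal_re]; positivity)
  have hkernel (x y : V) : (heatKernel t x y : ℂ) = ∫ ξ, conj (e x ξ) * e y ξ * g ξ := by
    rw [heatKernel_eq_fourier ht, fourier_eq']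
    refine integral_congr_ae (Filter.Eventually.of_forall fun ξ => ?_)
    simp only [e, g, smul_eq_mul, ← exp_conj, ← Complex.exp_add, map_mul, conj_ofReal, conj_I,
      inner_sub_right, real_inner_smul_right, real_inner_comm ξ]
    congr 2
    push_cast
    ring
  rw [heatContent, ← ofReal_inj]
  calc ((∫ x, ∫ y, heatKernel t x y ∂μ ∂μ : ℝ) : ℂ)
      = ∫ x, ∫ y, (heatKernel t x y : ℂ) ∂μ ∂μ :=
        integral_ofReal.symm.trans (integral_congr_ae (ae_of_all _ fun x => integral_ofReal.symm))
    _ = ∫ x, ∫ y, ∫ ξ, conj (e x ξ) * e y ξ * g ξ ∂volume ∂μ ∂μ := by simp only [hkernel]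
    _ = ∫ ξ, ‖∫ x, e x ξ ∂μ‖ ^ 2 * g ξ :=
        integral_integral_integral_conj_mul_mul μ volume he (fun x ξ => norm_exp_ofReal_mul_I _) hg
    _ = ∫ ξ, ((‖charFun μ ((2 * π) • ξ)‖ ^ 2 * rexp (-(4 * π ^ 2 * ‖ξ‖ ^ 2) * t) : ℝ) : ℂ) := by
        refine integral_congr_ae (Filter.Eventually.of_forall fun ξ => ?_)
        simp only [e, g, ← charFun_apply, ofReal_mul, ofReal_pow, ofReal_exp]
        congr 2
        push_cast
        ring
    _ = _ := integral_ofReal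

theorem integrable_sq_norm_charFun_mul_exp (μ : Measure V) [IsFiniteMeasure μ] {t : ℝ}
    (ht : 0 < t) :
    Integrable fun ξ => ‖charFun μ ((2 * π) • ξ)‖ ^ 2 * rexp (-(4 * π ^ 2 * ‖ξ‖ ^ 2) * t) := by
  have hgauss : Integrable fun ξ : V => rexp (-(4 * π ^ 2 * ‖ξ‖ ^ 2) * t) :=
    (integrable_exp_neg_mul_sq_norm (b := 4 * π ^ 2 * t) (by positivity)).congr
      (ae_of_all _ fun ξ => by ring_nf)
  refine (hgauss.const_mul (μ.real Set.univ ^ 2)).mono' ?_ (ae_of_all _ fun ξ => ?_)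
  · exact (((continuous_charFun.comp (continuous_const_smul _)).norm.pow 2).mul
      (by fun_prop)).aestronglyMeasurable
  · rw [Real.norm_of_nonneg (by positivity)]
    gcongr
    exact norm_charFun_le _

theorem convexOn_heatContent (μ : Measure V) [IsFiniteMeasure μ] :
    ConvexOn ℝ (Set.Ioi 0) (heatContent μ) := by
  refine (integral_convexOn_of_integrand_ae (convex_Ioi 0)
    (ae_of_all _ fun ξ => (convexOn_mul_exp_mul (by positivity) _).subset (Set.subset_univ _)
      (convex_Ioi 0))
    (fun t ht => integrable_sq_norm_charFun_mul_exp μ ht)).congr fun t ht => ?_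
  exact (heatContent_eq_integral_charFun μ ht).symm

end

theorem heat_content_convex_general (m : ℕ)
    (Ω : Set (EuclideanSpace ℝ (Fin m)))
    (hvol : volume Ω < ⊤) :
    ConvexOn ℝ (Set.Ioi 0) (fun t : ℝ => ∫ x in Ω, ∫ y in Ω,
        (4 * Real.pi * t) ^ (-(m : ℝ) / 2) * Real.exp (-(dist x y) ^ 2 / (4 * t))) := by
  have : IsFiniteMeasure (volume.restrict Ω) := isFiniteMeasure_restrict.2 hvol.ne
  convert convexOn_heatContent (volume.restrict Ω) using 1
  funext t
  simp only [heatContent, heatKernel, finrank_euclideanSpace, Fintype.card_fin]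

theorem heat_content_convex (m : ℕ) (hm : 1 ≤ m)
    (Ω : Set (EuclideanSpace ℝ (Fin m))) (hΩ : IsOpen Ω) (hne : Ω.Nonempty)
    (hpos : 0 < volume Ω) (hvol : volume Ω < ⊤) :
    ConvexOn ℝ (Set.Ioi 0) (fun t : ℝ => ∫ x in Ω, ∫ y in Ω,
        (4 * Real.pi * t) ^ (-(m : ℝ) / 2) * Real.exp (-(dist x y) ^ 2 / (4 * t))) :=
  heat_content_convex_general m Ω hvol
end

section
/- The function f(t) = (2.42/t − 1)e^{−1/t} on (0,∞) attains its maximum at t = 121/171, with maximum value (121/50)e^{−171/121}; moreover (1/50) + (121/50)e^{−171/121} + e^{−1} − e^{−1.21} − e^{−1/4} < −0.1. -/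
open Real

lemma key_ineq (s : ℝ) :
    (2.42 * s - 1) * Real.exp (-s) ≤ (121 / 50) * Real.exp (-171 / 121) := by
  have h := Real.add_one_le_exp (s - 171 / 121)
  have h1 : 2.42 * s - 1 ≤ (121 / 50) * Real.exp (s - 171 / 121) := by
    nlinarith [h]
  have h2 := mul_le_mul_of_nonneg_right h1 (Real.exp_pos (-s)).le
  calc (2.42 * s - 1) * Real.exp (-s)
      ≤ (121 / 50) * Real.exp (s - 171 / 121) * Real.exp (-s) := h2
    _ = (121 / 50) * Real.exp (-171 / 121) := by
        rw [mul_assoc, ← Real.exp_add]; ring_nf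

theorem max_and_numerical_inequality :
    (∀ t : ℝ, 0 < t →
      (2.42 / t - 1) * Real.exp (-1 / t) ≤ (121 / 50) * Real.exp (-171 / 121)) ∧
    (2.42 / ((121 : ℝ) / 171) - 1) * Real.exp (-1 / ((121 : ℝ) / 171))
        = (121 / 50) * Real.exp (-171 / 121) ∧
    (1 : ℝ) / 50 + (121 / 50) * Real.exp (-171 / 121) + Real.exp (-1)
        - Real.exp (-1.21) - Real.exp (-1 / 4) < -0.1 := by
  refine ⟨?_, ?_, ?_⟩
  · intro t ht
    have := key_ineq (1 / t)
    have e1 : 2.42 / t = 2.42 * (1 / t) := by ring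
    have e2 : -1 / t = -(1 / t) := by ring
    rw [e1, e2]
    exact this
  · have e1 : (2.42 / ((121 : ℝ) / 171) - 1) = 121 / 50 := by norm_num
    have e2 : (-1 / ((121 : ℝ) / 171)) = -171 / 121 := by norm_num
    rw [e1, e2]
  · -- numerical bounds
    -- lower bound for exp (171/242)
    have hq : (0 : ℝ) ≤ 171 / 242 := by norm_num
    have hL : (∑ i ∈ Finset.range 10, ((171 : ℝ) / 242) ^ i / i.factorial)
        ≤ Real.exp (171 / 242) := Real.sum_le_exp_of_nonneg hq 10
    have hLval : (2.02711 : ℝ) ≤ Real.exp (171 / 242) := by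
      refine le_trans ?_ hL
      simp only [Finset.sum_range_succ, Finset.sum_range_zero]
      norm_num [Nat.factorial]
    have hexp171 : (4.109174 : ℝ) ≤ Real.exp (171 / 121) := by
      have : Real.exp (171 / 121) = Real.exp (171 / 242) * Real.exp (171 / 242) := by
        rw [← Real.exp_add]; norm_num
      rw [this]
      nlinarith [hLval, Real.exp_pos ((171:ℝ)/242)]
    have hB1' : Real.exp (-171 / 121) ≤ 1 / 4.109174 := by
      rw [show (-171 : ℝ) / 121 = -(171 / 121) by norm_num, Real.exp_neg]
      rw [inv_le_comm₀ (Real.exp_pos _) (by norm_num)]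
      linarith [hexp171]
    -- upper bound for exp 1 lower: exp(-1) < 1/2.7182818283
    have hE := Real.exp_one_gt_d9
    have hB2 : Real.exp (-1) < 1 / 2.7182818283 := by
      rw [Real.exp_neg, one_div]
      gcongr
    -- upper bound for exp (121/200)
    have hU : Real.exp ((121 : ℝ) / 200) ≤
        (∑ m ∈ Finset.range 10, ((121 : ℝ) / 200) ^ m / m.factorial) +
          ((121 : ℝ) / 200) ^ 10 * (10 + 1) / ((10 : ℕ).factorial * 10) :=
      Real.exp_bound' (by norm_num) (by norm_num) (by norm_num)
    have hUval : Real.exp ((121 : ℝ) / 200) ≤ 1.83126 := by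
      refine le_trans hU ?_
      simp only [Finset.sum_range_succ, Finset.sum_range_zero]
      norm_num [Nat.factorial]
    have hexp121 : Real.exp ((121 : ℝ) / 100) ≤ 1.83126 * 1.83126 := by
      have : Real.exp ((121 : ℝ) / 100) = Real.exp (121 / 200) * Real.exp (121 / 200) := by
        rw [← Real.exp_add]; norm_num
      rw [this]
      nlinarith [hUval, Real.exp_pos ((121:ℝ)/200)]
    have hB3 : 1 / (1.83126 * 1.83126) ≤ Real.exp (-1.21) := by
      rw [show (-1.21 : ℝ) = -(121 / 100) by norm_num, Real.exp_neg]
      rw [le_inv_comm₀ (by norm_num) (Real.exp_pos _), one_div, inv_inv]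
      exact hexp121
    -- upper bound for exp (1/4)
    have hU4 : Real.exp ((1 : ℝ) / 4) ≤
        (∑ m ∈ Finset.range 8, ((1 : ℝ) / 4) ^ m / m.factorial) +
          ((1 : ℝ) / 4) ^ 8 * (8 + 1) / ((8 : ℕ).factorial * 8) :=
      Real.exp_bound' (by norm_num) (by norm_num) (by norm_num)
    have hU4val : Real.exp ((1 : ℝ) / 4) ≤ 1.2840255 := by
      refine le_trans hU4 ?_
      simp only [Finset.sum_range_succ, Finset.sum_range_zero]
      norm_num [Nat.factorial]
    have hB4 : 1 / 1.2840255 ≤ Real.exp (-1 / 4) := by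
      rw [show (-1 : ℝ) / 4 = -(1 / 4) by norm_num, Real.exp_neg]
      rw [le_inv_comm₀ (by norm_num) (Real.exp_pos _),
        show ((1:ℝ)/1.2840255)⁻¹ = 1.2840255 from by norm_num]
      exact hU4val
    nlinarith [hB1', hB2, hB3, hB4]
end
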